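/- Algebraic identities for the weighting matrices Q_i: with G a d×d matrix, step sizes α_k, G_{i:j}^{(α)} = Π_{k=i}^{j}(I − α_k G) (empty products equal I), and Q_i = α_i Σ_{j=i}^{n−1} Π_{k=i+1}^{j}(I − α_k G), if G is invertible then (i) Q_i − G^{−1} = S_i − G^{−1} G_{i:n−1}^{(α)}, where S_i = Σ_{j=i+1}^{n−1} (α_i − α_j) G_{i+1:j−1}^{(α)}, and (ii) Σ_{i=1}^{n−1} (Q_i − G^{−1}) = −G^{−1} Σ_{j=1}^{n−1} G_{1:j}^{(α)}. -/
import Mathlib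


open Matrix

noncomputable section

/-- Ordered matrix product `G_{i:j}^{(α)} = Π_{k=i}^{j} (I - α_k G)`
(empty products, i.e. `j < i`, equal the identity). -/
def matProdIcc {d : ℕ} (G : Matrix (Fin d) (Fin d) ℝ) (α : ℕ → ℝ) (i j : ℕ) :
    Matrix (Fin d) (Fin d) ℝ :=
  ((List.Ico i (j + 1)).map fun k => 1 - α k • G).prod

/-- `Q_i = α_i Σ_{j=i}^{n-1} Π_{k=i+1}^{j} (I - α_k G)`. -/
def matQ {d : ℕ} (G : Matrix (Fin d) (Fin d) ℝ) (α : ℕ → ℝ) (n i : ℕ) :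
    Matrix (Fin d) (Fin d) ℝ :=
  α i • ∑ j ∈ Finset.Ico i n, matProdIcc G α (i + 1) j

/-- `S_i = Σ_{j=i+1}^{n-1} (α_i - α_j) G_{i+1:j-1}^{(α)}`. -/
def matS {d : ℕ} (G : Matrix (Fin d) (Fin d) ℝ) (α : ℕ → ℝ) (n i : ℕ) :
    Matrix (Fin d) (Fin d) ℝ :=
  ∑ j ∈ Finset.Ico (i + 1) n, (α i - α j) • matProdIcc G α (i + 1) (j - 1)

section Aux

variable {d : ℕ} (G : Matrix (Fin d) (Fin d) ℝ) (α : ℕ → ℝ)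

lemma matProdIcc_of_lt {i j : ℕ} (h : j < i) : matProdIcc G α i j = 1 := by
  unfold matProdIcc
  rw [List.Ico.eq_nil_of_le (by omega)]
  simp

lemma matProdIcc_cons {i j : ℕ} (h : i ≤ j) :
    matProdIcc G α i j = (1 - α i • G) * matProdIcc G α (i + 1) j := by
  unfold matProdIcc
  rw [List.Ico.eq_cons (by omega), List.map_cons, List.prod_cons]

lemma commute_matProdIcc (i j : ℕ) : Commute G (matProdIcc G α i j) := by
  apply Commute.list_prod_right
  intro x hx
  simp only [List.mem_map] at hx
  obtain ⟨k, -, rfl⟩ := hx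
  exact (Commute.one_right G).sub_right ((Commute.refl G).smul_right (α k))

lemma matProdIcc_snoc {i j : ℕ} (h : i ≤ j + 1) :
    matProdIcc G α i (j + 1) = matProdIcc G α i j * (1 - α (j + 1) • G) := by
  unfold matProdIcc
  rw [List.Ico.succ_top (by omega), List.map_append, List.prod_append]
  simp

lemma sum_Ico_telescope {M : Type*} [AddCommGroup M] (f : ℕ → M) {a b : ℕ} (h : a ≤ b) :
    ∑ i ∈ Finset.Ico a b, (f (i + 1) - f i) = f b - f a := by
  induction b, h using Nat.le_induction with
  | base => simp
  | succ b hb ih => rw [Finset.sum_Ico_succ_top (by omega), ih]; abel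

/-- left telescoping: `Σ_{i=a}^{j} α_i G P_{i+1:j} = 1 - P_{a:j}` -/
lemma teleL (j a : ℕ) (h : a ≤ j + 1) :
    ∑ i ∈ Finset.Ico a (j + 1), α i • (G * matProdIcc G α (i + 1) j)
      = 1 - matProdIcc G α a j := by
  have this : ∑ i ∈ Finset.Ico a (j + 1),
      (matProdIcc G α (i + 1) j - matProdIcc G α i j)
      = matProdIcc G α (j + 1) j - matProdIcc G α a j :=
    sum_Ico_telescope (fun i => matProdIcc G α i j) h
  rw [matProdIcc_of_lt G α (by omega)] at this
  rw [← this]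
  apply Finset.sum_congr rfl
  intro i hi
  simp only [Finset.mem_Ico] at hi
  rw [matProdIcc_cons G α (show i ≤ j by omega)]
  simp only [sub_mul, one_mul, smul_mul_assoc]
  abel

/-- right telescoping: `Σ_{j=i+1}^{n-1} α_j G P_{i+1:j-1} = 1 - P_{i+1:n-1}` -/
lemma teleR (i : ℕ) {n : ℕ} (h : i + 1 ≤ n) :
    ∑ j ∈ Finset.Ico (i + 1) n, α j • (G * matProdIcc G α (i + 1) (j - 1))
      = 1 - matProdIcc G α (i + 1) (n - 1) := by
  induction n, h using Nat.le_induction with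
  | base => rw [Finset.Ico_self, Finset.sum_empty, matProdIcc_of_lt G α (by omega)]; simp
  | succ n hn ih =>
      obtain ⟨m, rfl⟩ : ∃ m, n = m + 1 := ⟨n - 1, by omega⟩
      rw [Finset.sum_Ico_succ_top (by omega), ih]
      have hsnoc := matProdIcc_snoc G α (show i + 1 ≤ m + 1 by omega)
      simp only [Nat.add_sub_cancel] at *
      rw [hsnoc, mul_sub, mul_one, mul_smul_comm,
        (commute_matProdIcc G α (i+1) m).eq]
      abel

end Aux

/-- Algebraic identities for the weighting matrices `Q_i`:
(i) `Q_i - G⁻¹ = S_i - G⁻¹ G_{i:n-1}^{(α)}`, and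
(ii) `Σ_{i=1}^{n-1} (Q_i - G⁻¹) = - G⁻¹ Σ_{j=1}^{n-1} G_{1:j}^{(α)}`. -/
theorem matQ_identities
    {d : ℕ} (G Ginv : Matrix (Fin d) (Fin d) ℝ) (α : ℕ → ℝ)
    (hGinv : G * Ginv = 1 ∧ Ginv * G = 1) (n : ℕ) :
    (∀ i ∈ Finset.Ico 1 n,
      matQ G α n i - Ginv = matS G α n i - Ginv * matProdIcc G α i (n - 1)) ∧
    ∑ i ∈ Finset.Ico 1 n, (matQ G α n i - Ginv) =
      -(Ginv * ∑ j ∈ Finset.Ico 1 n, matProdIcc G α 1 j) := by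
  obtain ⟨hGr, hGl⟩ := hGinv
  have hcancel : ∀ M : Matrix (Fin d) (Fin d) ℝ, Ginv * (G * M) = M := by
    intro M; rw [← mul_assoc, hGl, one_mul]
  constructor
  · intro i hi
    simp only [Finset.mem_Ico] at hi
    obtain ⟨hi1, hin⟩ := hi
    set T : Matrix (Fin d) (Fin d) ℝ :=
      ∑ j ∈ Finset.Ico (i + 1) n, α j • matProdIcc G α (i + 1) (j - 1) with hT
    have hGT : G * T = 1 - matProdIcc G α (i + 1) (n - 1) := by
      rw [hT, Finset.mul_sum]
      simp_rw [mul_smul_comm]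
      exact teleR G α i (by omega)
    have hTval : T = Ginv - Ginv * matProdIcc G α (i + 1) (n - 1) := by
      rw [← hcancel T, hGT, mul_sub, mul_one]
    have hS : matS G α n i =
        (∑ j ∈ Finset.Ico (i + 1) n, α i • matProdIcc G α (i + 1) (j - 1)) - T := by
      rw [matS, hT, ← Finset.sum_sub_distrib]
      exact Finset.sum_congr rfl fun j _ => sub_smul _ _ _
    obtain ⟨m, rfl⟩ : ∃ m, n = m + 1 := ⟨n - 1, by omega⟩
    have hQsum : ∑ j ∈ Finset.Ico i (m + 1), matProdIcc G α (i + 1) j =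
        (∑ j ∈ Finset.Ico (i + 1) (m + 1), matProdIcc G α (i + 1) (j - 1)) +
          matProdIcc G α (i + 1) (m + 1 - 1) := by
      rw [Finset.sum_Ico_eq_sum_range, Finset.sum_Ico_eq_sum_range]
      have h1 : m + 1 - i = (m - i) + 1 := by omega
      have h2 : m + 1 - (i + 1) = m - i := by omega
      rw [h1, h2, Finset.sum_range_succ]
      congr 1
      · apply Finset.sum_congr rfl; intro k _
        have hk : i + 1 + k - 1 = i + k := by omega
        rw [hk]
      · have hm : i + (m - i) = m + 1 - 1 := by omega
        rw [hm]
    have hP : Ginv * matProdIcc G α i (m + 1 - 1) =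
        Ginv * matProdIcc G α (i + 1) (m + 1 - 1) -
          α i • matProdIcc G α (i + 1) (m + 1 - 1) := by
      rw [matProdIcc_cons G α (show i ≤ m + 1 - 1 by omega), ← mul_assoc, mul_sub,
        mul_one, mul_smul_comm, hGl, sub_mul, smul_mul_assoc, one_mul]
    rw [matQ, hQsum, smul_add, Finset.smul_sum, hS, hTval, hP]
    abel
  · have inner : ∀ j, (∑ i ∈ Finset.Ico 1 (j + 1), α i • matProdIcc G α (i + 1) j) =
        Ginv - Ginv * matProdIcc G α 1 j := by
      intro j
      have hG : G * (∑ i ∈ Finset.Ico 1 (j + 1), α i • matProdIcc G α (i + 1) j) =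
          1 - matProdIcc G α 1 j := by
        rw [Finset.mul_sum]
        simp_rw [mul_smul_comm]
        exact teleL G α j 1 (by omega)
      rw [← hcancel (∑ i ∈ Finset.Ico 1 (j + 1), α i • matProdIcc G α (i + 1) j), hG,
        mul_sub, mul_one]
    rw [Finset.sum_sub_distrib]
    have h1 : ∑ i ∈ Finset.Ico 1 n, matQ G α n i =
        (∑ _i ∈ Finset.Ico 1 n, Ginv) - Ginv * ∑ j ∈ Finset.Ico 1 n, matProdIcc G α 1 j := by
      simp only [matQ, Finset.smul_sum]
      rw [Finset.sum_Ico_Ico_comm, Finset.sum_congr rfl (fun j _ => inner j),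
        Finset.sum_sub_distrib, Finset.mul_sum]
    rw [h1]
    abel
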